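/- arXiv:1011.0802 — 3 statements merged into one kernel-verified Lean document; each statement's English description precedes it below -/
import Mathlib

section
/- Let A be a Banach algebra whose second dual A** (with first Arens product) has the T-w*w property, and let T, S : A → A be continuous linear maps. If D : A → A* is a T-S-derivation, then its second adjoint D'' : A** → A*** is a T''-S''-derivation. -/
/-!
Write `D' = adjCLM D : A** → A*`, fix `b''` and `x''`, and read both sides of the `T''-S''` identity,
evaluated at `x''`, as functions of `a''`. The left side `a''(b''·D'(x''))` and the term
`a''(D'(S''(b'')x''))` are evaluations of `a''` at fixed elements of `A*`, hence weak-star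
continuous; the remaining term `b''(D'(x''T''(a'')))` is weak-star continuous by the `T-w*w`
property. For `a'' ∈ A` the identity reduces to `x''(D(ab)) = x''(T(a)·D(b) + D(a)·S(b))`, and `A`
is weak-star dense in `A**` by Goldstine's theorem.
-/

set_option maxHeartbeats 1000000

namespace NormedSpace

/-- The topological dual of a seminormed space `E` (the former Mathlib `NormedSpace.Dual`). -/
abbrev Dual (𝕜 : Type*) [NontriviallyNormedField 𝕜] (E : Type*) [SeminormedAddCommGroup E]
    [NormedSpace 𝕜 E] : Type _ := E →L[𝕜] 𝕜

end NormedSpace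

open Filter Topology ContinuousLinearMap NormedSpace

noncomputable section ArensSetup

/-- The adjoint (transpose) of a continuous linear map between normed spaces. -/
def adjCLM {E F : Type*} [SeminormedAddCommGroup E] [NormedSpace ℝ E]
    [SeminormedAddCommGroup F] [NormedSpace ℝ F] (T : E →L[ℝ] F) :
    Dual ℝ F →L[ℝ] Dual ℝ E :=
  (ContinuousLinearMap.compL ℝ E F ℝ).flip T

@[simp] theorem adjCLM_apply {E F : Type*} [SeminormedAddCommGroup E] [NormedSpace ℝ E]
    [SeminormedAddCommGroup F] [NormedSpace ℝ F] (T : E →L[ℝ] F) (g : Dual ℝ F) (x : E) :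
    adjCLM T g x = g (T x) := rfl

/-- One-step Arens-type adjoint of a bounded bilinear map:
`ext1 β g' e = g' ∘ (β e)`. -/
def ext1 {E F G : Type*} [SeminormedAddCommGroup E] [NormedSpace ℝ E]
    [SeminormedAddCommGroup F] [NormedSpace ℝ F] [SeminormedAddCommGroup G] [NormedSpace ℝ G]
    (β : E →L[ℝ] F →L[ℝ] G) : Dual ℝ G →L[ℝ] E →L[ℝ] Dual ℝ F :=
  ((ContinuousLinearMap.compL ℝ F G ℝ).flip.comp β).flip

@[simp] theorem ext1_apply {E F G : Type*} [SeminormedAddCommGroup E] [NormedSpace ℝ E]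
    [SeminormedAddCommGroup F] [NormedSpace ℝ F] [SeminormedAddCommGroup G] [NormedSpace ℝ G]
    (β : E →L[ℝ] F →L[ℝ] G) (g' : Dual ℝ G) (e : E) (f : F) :
    ext1 β g' e f = g' (β e f) := rfl

/-- Triple adjoint: the (first) Arens extension of a bounded bilinear map to the
second duals. -/
def ext3 {E F G : Type*} [SeminormedAddCommGroup E] [NormedSpace ℝ E]
    [SeminormedAddCommGroup F] [NormedSpace ℝ F] [SeminormedAddCommGroup G] [NormedSpace ℝ G]
    (β : E →L[ℝ] F →L[ℝ] G) :
    Dual ℝ (Dual ℝ E) →L[ℝ] Dual ℝ (Dual ℝ F) →L[ℝ] Dual ℝ (Dual ℝ G) :=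
  ext1 (ext1 (ext1 β))

variable (A : Type*) [NonUnitalNormedRing A] [NormedSpace ℝ A]
  [SMulCommClass ℝ A A] [IsScalarTower ℝ A A] [CompleteSpace A]

/-- The first (left) Arens product on `A**`: `⟨a''b'', a'⟩ = ⟨a'', b''a'⟩`. -/
def fArens : Dual ℝ (Dual ℝ A) →L[ℝ] Dual ℝ (Dual ℝ A) →L[ℝ] Dual ℝ (Dual ℝ A) :=
  ext3 (ContinuousLinearMap.mul ℝ A)

/-- The second (right) Arens product on `A**`: `⟨a''∘b'', a'⟩ = ⟨b'', a'∘a''⟩`. -/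
def sArens : Dual ℝ (Dual ℝ A) →L[ℝ] Dual ℝ (Dual ℝ A) →L[ℝ] Dual ℝ (Dual ℝ A) :=
  (ext3 (ContinuousLinearMap.mul ℝ A).flip).flip

/-- `A` is Arens regular when the two Arens products on `A**` coincide. -/
def ArensRegular : Prop := fArens A = sArens A

variable {A}

/-- Weak-star to weak continuity for a map from the dual of `E` into `F`. -/
def WStarToWCont {E F : Type*} [SeminormedAddCommGroup E] [NormedSpace ℝ E]
    [SeminormedAddCommGroup F] [NormedSpace ℝ F] (f : Dual ℝ E → F) : Prop :=
  Continuous fun x : WeakDual ℝ E => toWeakSpace ℝ F (f (WeakDual.toStrongDual x))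

variable (A)

/-- The second adjoint `T'' : A** → A**` of `T : A → A`. -/
def secondAdj (T : A →L[ℝ] A) : Dual ℝ (Dual ℝ A) →L[ℝ] Dual ℝ (Dual ℝ A) :=
  adjCLM (adjCLM T)

/-- Left action of `A` on `A*`: `⟨a·a', b⟩ = ⟨a', ba⟩`. -/
def dualLeft : A →L[ℝ] Dual ℝ A →L[ℝ] Dual ℝ A :=
  (ext1 (ContinuousLinearMap.mul ℝ A).flip).flip

/-- Right action of `A` on `A*`: `⟨a'·a, b⟩ = ⟨a', ab⟩`. -/
def dualRight : Dual ℝ A →L[ℝ] A →L[ℝ] Dual ℝ A :=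
  ext1 (ContinuousLinearMap.mul ℝ A)

/-- Left action of `A**` (first Arens product) on `A***`. -/
def dualLeft2 : Dual ℝ (Dual ℝ A) →L[ℝ] Dual ℝ (Dual ℝ (Dual ℝ A)) →L[ℝ]
    Dual ℝ (Dual ℝ (Dual ℝ A)) :=
  (ext1 (fArens A).flip).flip

/-- Right action of `A**` (first Arens product) on `A***`. -/
def dualRight2 : Dual ℝ (Dual ℝ (Dual ℝ A)) →L[ℝ] Dual ℝ (Dual ℝ A) →L[ℝ]
    Dual ℝ (Dual ℝ (Dual ℝ A)) :=
  ext1 (fArens A)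

end ArensSetup

section BimoduleSetup

set_option maxHeartbeats 1000000

open Filter Topology ContinuousLinearMap NormedSpace

/-- A Banach `A`-bimodule: bounded bilinear left and right actions satisfying the
usual compatibility axioms. -/
structure BanachBimodule (A X : Type*) [NonUnitalNormedRing A] [NormedSpace ℝ A]
    [SMulCommClass ℝ A A] [IsScalarTower ℝ A A]
    [NormedAddCommGroup X] [NormedSpace ℝ X] [CompleteSpace X] where
  l : A →L[ℝ] X →L[ℝ] X
  r : X →L[ℝ] A →L[ℝ] X
  l_mul : ∀ a b x, l (a * b) x = l a (l b x)
  r_mul : ∀ x a b, r (r x a) b = r x (a * b)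
  l_r : ∀ a x b, l a (r x b) = r (l a x) b

variable {A X : Type*} [NonUnitalNormedRing A] [NormedSpace ℝ A]
  [SMulCommClass ℝ A A] [IsScalarTower ℝ A A] [CompleteSpace A]
  [NormedAddCommGroup X] [NormedSpace ℝ X] [CompleteSpace X]

/-- Left action of `A` on `X*`: `⟨a·f, x⟩ = ⟨f, x·a⟩`. -/
noncomputable def modDualLeft (M : BanachBimodule A X) : A →L[ℝ] Dual ℝ X →L[ℝ] Dual ℝ X :=
  (ext1 M.r.flip).flip

/-- Right action of `A` on `X*`: `⟨f·a, x⟩ = ⟨f, a·x⟩`. -/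
noncomputable def modDualRight (M : BanachBimodule A X) : Dual ℝ X →L[ℝ] A →L[ℝ] Dual ℝ X :=
  ext1 M.l

/-- Left action of `A**` on `X**` (first Arens extension). -/
noncomputable def modL2 (M : BanachBimodule A X) :
    Dual ℝ (Dual ℝ A) →L[ℝ] Dual ℝ (Dual ℝ X) →L[ℝ] Dual ℝ (Dual ℝ X) :=
  ext3 M.l

/-- Right action of `A**` on `X**` (first Arens extension); `modR2 M x'' a'' = x''a''`. -/
noncomputable def modR2 (M : BanachBimodule A X) :
    Dual ℝ (Dual ℝ X) →L[ℝ] Dual ℝ (Dual ℝ A) →L[ℝ] Dual ℝ (Dual ℝ X) :=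
  ext3 M.r

/-- Left action of `A**` on `X***`: `⟨a''·x''', x''⟩ = ⟨x''', x''a''⟩`. -/
noncomputable def modL3 (M : BanachBimodule A X) :
    Dual ℝ (Dual ℝ A) →L[ℝ] Dual ℝ (Dual ℝ (Dual ℝ X)) →L[ℝ] Dual ℝ (Dual ℝ (Dual ℝ X)) :=
  (ext1 (modR2 M).flip).flip

/-- Right action of `A**` on `X***`: `⟨x'''·a'', x''⟩ = ⟨x''', a''x''⟩`. -/
noncomputable def modR3 (M : BanachBimodule A X) :
    Dual ℝ (Dual ℝ (Dual ℝ X)) →L[ℝ] Dual ℝ (Dual ℝ A) →L[ℝ] Dual ℝ (Dual ℝ (Dual ℝ X)) :=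
  ext1 (modL2 M)

end BimoduleSetup

section DerivationSetup

variable {B Y : Type*} [SeminormedAddCommGroup B] [NormedSpace ℝ B]
  [SeminormedAddCommGroup Y] [NormedSpace ℝ Y]

/-- `D` is a derivation with respect to the multiplication `m` and the module
actions `l`, `r`. -/
def IsDeriv (m : B →L[ℝ] B →L[ℝ] B) (l : B →L[ℝ] Y →L[ℝ] Y)
    (r : Y →L[ℝ] B →L[ℝ] Y) (D : B →L[ℝ] Y) : Prop :=
  ∀ a b, D (m a b) = l a (D b) + r (D a) b

/-- `D` is an inner derivation: `D a = a·y − y·a` for some fixed `y`. -/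
def IsInner (l : B →L[ℝ] Y →L[ℝ] Y) (r : Y →L[ℝ] B →L[ℝ] Y) (D : B →L[ℝ] Y) : Prop :=
  ∃ y, ∀ a, D a = l a y - r y a

/-- `D` is a `T-S`-derivation: `D(ab) = T(a)·D(b) + D(a)·S(b)`. -/
def IsTSDeriv (m : B →L[ℝ] B →L[ℝ] B) (l : B →L[ℝ] Y →L[ℝ] Y)
    (r : Y →L[ℝ] B →L[ℝ] Y) (T S : B →L[ℝ] B) (D : B →L[ℝ] Y) : Prop :=
  ∀ a b, D (m a b) = l (T a) (D b) + r (D a) (S b)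

/-- `D` is an inner `T-S`-derivation: `D a = T(a)·y − y·S(a)` for some fixed `y`. -/
def IsTSInner (l : B →L[ℝ] Y →L[ℝ] Y) (r : Y →L[ℝ] B →L[ℝ] Y)
    (T S : B →L[ℝ] B) (D : B →L[ℝ] Y) : Prop :=
  ∃ y, ∀ a, D a = l (T a) y - r y (S a)

end DerivationSetup

theorem Submodule.dense_of_forall_dual_eq_zero {E : Type*} [AddCommGroup E] [Module ℝ E]
    [TopologicalSpace E] [IsTopologicalAddGroup E] [ContinuousSMul ℝ E] [LocallyConvexSpace ℝ E]
    (p : Submodule ℝ E) (hp : ∀ f : E →L[ℝ] ℝ, (∀ x ∈ p, f x = 0) → f = 0) :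
    Dense (p : Set E) := by
  rw [Submodule.dense_iff_topologicalClosure_eq_top, Submodule.eq_top_iff']
  by_contra! ⟨x, hx⟩
  obtain ⟨f, u, hfu, hux⟩ := geometric_hahn_banach_closed_point
    p.topologicalClosure.convex p.isClosed_topologicalClosure hx
  have hu : 0 < u := by simpa using hfu 0 p.topologicalClosure.zero_mem
  -- `f` is bounded above on a subspace, hence vanishes there.
  have hf : ∀ y ∈ p.topologicalClosure, f y = 0 := by
    intro y hy
    by_contra hfy
    have := hfu _ (p.topologicalClosure.smul_mem ((u + 1) / f y) hy)
    rw [map_smul, smul_eq_mul, div_mul_cancel₀ _ hfy] at this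
    linarith
  rw [hp f fun y hy => hf y (p.le_topologicalClosure hy), zero_apply] at hux
  linarith

theorem denseRange_toWeakDual_inclusionInDoubleDual (E : Type*) [NormedAddCommGroup E]
    [NormedSpace ℝ E] :
    DenseRange fun x : E => StrongDual.toWeakDual (inclusionInDoubleDual ℝ E x) := by
  let _ : LocallyConvexSpace ℝ (WeakDual ℝ (Dual ℝ E)) := WeakBilin.locallyConvexSpace
  let J : E →ₗ[ℝ] WeakDual ℝ (Dual ℝ E) :=
    StrongDual.toWeakDual.toLinearMap ∘ₗ (inclusionInDoubleDual ℝ E).toLinearMap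
  have hJ : Dense (LinearMap.range J : Set (WeakDual ℝ (Dual ℝ E))) := by
    refine (LinearMap.range J).dense_of_forall_dual_eq_zero fun f hf => ?_
    obtain ⟨y, rfl⟩ := LinearMap.dualEmbedding_surjective (topDualPairing ℝ (Dual ℝ E)) f
    obtain rfl : y = 0 := ContinuousLinearMap.ext fun a => hf _ ⟨a, rfl⟩
    exact map_zero _
  rwa [LinearMap.coe_range] at hJ

theorem WStarToWCont.continuous_apply {E F : Type*} [SeminormedAddCommGroup E] [NormedSpace ℝ E]
    [SeminormedAddCommGroup F] [NormedSpace ℝ F] {f : Dual ℝ E → F} (hf : WStarToWCont f)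
    (φ : Dual ℝ F) : Continuous fun x : WeakDual ℝ E => φ (f (WeakDual.toStrongDual x)) :=
  (WeakBilin.eval_continuous (topDualPairing ℝ F).flip φ).comp hf

section TSDerivation

variable {A : Type*} [NonUnitalNormedRing A] [NormedSpace ℝ A]
  [SMulCommClass ℝ A A] [IsScalarTower ℝ A A]

theorem IsTSDeriv.dualRight_adjoint {T S : A →L[ℝ] A} {D : A →L[ℝ] Dual ℝ A}
    (hD : IsTSDeriv (ContinuousLinearMap.mul ℝ A) (dualLeft A) (dualRight A) T S D)
    (x'' : Dual ℝ (Dual ℝ A)) (a : A) :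
    dualRight A (adjCLM D x'') a =
      adjCLM D (fArens A x'' (inclusionInDoubleDual ℝ A (T a)))
        + adjCLM S (ext1 (ext1 (ContinuousLinearMap.mul ℝ A)) x'' (D a)) := by
  ext b
  change x'' (D (a * b)) = x'' (dualLeft A (T a) (D b)) + x'' (dualRight A (D a) (S b))
  rw [← map_add, ← hD]
  rfl

theorem IsTSDeriv.secondAdjoint_inclusion {T S : A →L[ℝ] A} {D : A →L[ℝ] Dual ℝ A}
    (hD : IsTSDeriv (ContinuousLinearMap.mul ℝ A) (dualLeft A) (dualRight A) T S D)
    (a : A) (b'' : Dual ℝ (Dual ℝ A)) :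
    adjCLM (adjCLM D) (fArens A (inclusionInDoubleDual ℝ A a) b'') =
      dualLeft2 A (secondAdj A T (inclusionInDoubleDual ℝ A a)) (adjCLM (adjCLM D) b'')
        + dualRight2 A (adjCLM (adjCLM D) (inclusionInDoubleDual ℝ A a)) (secondAdj A S b'') := by
  ext x''
  change b'' (dualRight A (adjCLM D x'') a) = _
  rw [hD.dualRight_adjoint, map_add]
  rfl

end TSDerivation

section Statements
set_option maxHeartbeats 1000000
open Filter Topology ContinuousLinearMap NormedSpace

variable {A : Type*} [NonUnitalNormedRing A] [NormedSpace ℝ A]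
  [SMulCommClass ℝ A A] [IsScalarTower ℝ A A] [CompleteSpace A]

/-- If `A**` has the `T-w*w` property and `D : A → A*` is a `T-S`-derivation, then
`D'' : A** → A***` is a `T''-S''`-derivation. -/
theorem secondAdjoint_TSderivation (T S : A →L[ℝ] A)
    (hT : ∀ a'' : Dual ℝ (Dual ℝ A), WStarToWCont (fun b'' => fArens A a'' (secondAdj A T b'')))
    (D : A →L[ℝ] Dual ℝ A)
    (hD : IsTSDeriv (ContinuousLinearMap.mul ℝ A) (dualLeft A) (dualRight A) T S D) :
    IsTSDeriv (fArens A) (dualLeft2 A) (dualRight2 A)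
      (secondAdj A T) (secondAdj A S) (adjCLM (adjCLM D)) := by
  intro a'' b''
  ext x''
  let D'' := adjCLM (adjCLM D)
  have hL : Continuous fun φ : WeakDual ℝ (Dual ℝ A) =>
      D'' (fArens A (WeakDual.toStrongDual φ) b'') x'' :=
    -- `D''(a''b'')(x'') = a''(b''·D'(x''))`
    WeakDual.eval_continuous (ext1 (ext1 (ContinuousLinearMap.mul ℝ A)) b'' (adjCLM D x''))
  have hR : Continuous fun φ : WeakDual ℝ (Dual ℝ A) =>
      (dualLeft2 A (secondAdj A T (WeakDual.toStrongDual φ)) (D'' b'')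
        + dualRight2 A (D'' (WeakDual.toStrongDual φ)) (secondAdj A S b'')) x'' :=
    ((hT x'').continuous_apply (b''.comp (adjCLM D))).add
      (WeakDual.eval_continuous (adjCLM D (fArens A (secondAdj A S b'') x'')))
  have := (denseRange_toWeakDual_inclusionInDoubleDual A).equalizer hL hR
    (funext fun a => congrArg (· x'') (hD.secondAdjoint_inclusion a b''))
  exact congrFun this (StrongDual.toWeakDual a'')

end Statements
end

section
/- Let A be a Banach algebra satisfying A***·A** ⊆ A* (where the module action is induced by the first Arens product). Then A** has the I-w*w property: for each a'' ∈ A**, the map b'' ↦ a''b'' on A** is weak-star to weak continuous. Consequently, if A** is weakly amenable, then A is weakly amenable. -/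
/-! A functional `c ∘ (a''□·)` on `A**` that is evaluation at a point of `A*` is weak*-continuous,
which is the `I-w*w` property. For a derivation `D : A → A*`, the second adjoint
`D'' : A** → A***` is a derivation as soon as `D''(A**)·A** ⊆ A*`, which the hypothesis grants;
weak amenability of `A**` then makes `D''` inner, `D'' = ad c`, and restricting `c` to `A`
shows `D = ad (c|_A)`. -/

set_option maxHeartbeats 1000000

open Filter Topology ContinuousLinearMap NormedSpace

section ArensDerivations

theorem wStarToWCont_of_comp_eq_inclusion {E F : Type*} [SeminormedAddCommGroup E]
    [NormedSpace ℝ E] [SeminormedAddCommGroup F] [NormedSpace ℝ F] (T : Dual ℝ E →L[ℝ] F)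
    (hT : ∀ c : Dual ℝ F, ∃ e : E, c.comp T = inclusionInDoubleDual ℝ E e) :
    WStarToWCont T := by
  refine WeakBilin.continuous_of_continuous_eval _ fun c => ?_
  obtain ⟨e, he⟩ := hT c
  have hcT : (fun x : WeakDual ℝ E => c (T (WeakDual.toStrongDual x))) = fun x => x e :=
    funext fun x => DFunLike.congr_fun he (WeakDual.toStrongDual x)
  exact hcT ▸ WeakBilin.eval_continuous _ e

variable {A : Type*} [NonUnitalNormedRing A] [NormedSpace ℝ A]
  [SMulCommClass ℝ A A] [IsScalarTower ℝ A A]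

/-- The action `⟨a''·a', a⟩ = ⟨a'', a'·a⟩` of `A**` on `A*`, in terms of which
`⟨a''b'', a'⟩ = ⟨a'', b''·a'⟩`. -/
noncomputable abbrev bidualDualLeft : Dual ℝ (Dual ℝ A) →L[ℝ] Dual ℝ A →L[ℝ] Dual ℝ A :=
  ext1 (ext1 (ContinuousLinearMap.mul ℝ A))

theorem bidualDualLeft_inclusion (a : A) (a' : Dual ℝ A) :
    bidualDualLeft (inclusionInDoubleDual ℝ A a) a' = dualLeft A a a' :=
  rfl

theorem fArens_inclusion (a b : A) :
    fArens A (inclusionInDoubleDual ℝ A a) (inclusionInDoubleDual ℝ A b)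
      = inclusionInDoubleDual ℝ A (a * b) :=
  rfl

theorem dualRight_adjCLM_of_isDeriv {D : A →L[ℝ] Dual ℝ A}
    (hD : IsDeriv (ContinuousLinearMap.mul ℝ A) (dualLeft A) (dualRight A) D)
    (w : Dual ℝ (Dual ℝ A)) (a : A) :
    dualRight A (adjCLM D w) a
      = adjCLM D (fArens A w (inclusionInDoubleDual ℝ A a)) + bidualDualLeft w (D a) := by
  ext b
  change w (D (a * b)) = w (bidualDualLeft (inclusionInDoubleDual ℝ A a) (D b))
    + w (dualRight A (D a) b)
  rw [bidualDualLeft_inclusion, ← map_add, ← hD]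
  rfl

/-- `hrange` says `D''(v)·w ∈ A*`. It makes `v·D'(w) − D'(v□w)` an element `a'` of `A*`, so that
`u(a') = v(D'(w□u))` supplies the first term of the derivation identity. -/
theorem isDeriv_adjCLM_adjCLM {D : A →L[ℝ] Dual ℝ A}
    (hD : IsDeriv (ContinuousLinearMap.mul ℝ A) (dualLeft A) (dualRight A) D)
    (hrange : ∀ v w : Dual ℝ (Dual ℝ A), ∃ a' : Dual ℝ A,
      (adjCLM (adjCLM D) v).comp (fArens A w) = inclusionInDoubleDual ℝ (Dual ℝ A) a') :
    IsDeriv (fArens A) (dualLeft2 A) (dualRight2 A) (adjCLM (adjCLM D)) := by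
  intro u v
  ext w
  obtain ⟨a', ha'⟩ := hrange v w
  have hvD : bidualDualLeft v (adjCLM D w) = a' + adjCLM D (fArens A v w) := by
    ext a
    change v (dualRight A (adjCLM D w) a) = a' a + v (bidualDualLeft w (D a))
    rw [dualRight_adjCLM_of_isDeriv hD, map_add]
    exact congrArg (· + _) (DFunLike.congr_fun ha' (inclusionInDoubleDual ℝ A a))
  change u (bidualDualLeft v (adjCLM D w))
    = v (adjCLM D (fArens A w u)) + u (adjCLM D (fArens A v w))
  rw [hvD, map_add]
  exact congrArg (· + _) (DFunLike.congr_fun ha' u).symm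

theorem isInner_of_isInner_adjCLM_adjCLM {D : A →L[ℝ] Dual ℝ A}
    (hD'' : IsInner (dualLeft2 A) (dualRight2 A) (adjCLM (adjCLM D))) :
    IsInner (dualLeft A) (dualRight A) D := by
  obtain ⟨c, hc⟩ := hD''
  refine ⟨c.comp (inclusionInDoubleDual ℝ A), fun a => ?_⟩
  ext b
  have h := DFunLike.congr_fun (hc (inclusionInDoubleDual ℝ A a)) (inclusionInDoubleDual ℝ A b)
  change adjCLM (adjCLM D) (inclusionInDoubleDual ℝ A a) (inclusionInDoubleDual ℝ A b) = _
  rw [h]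
  change c (fArens A (inclusionInDoubleDual ℝ A b) (inclusionInDoubleDual ℝ A a))
      - c (fArens A (inclusionInDoubleDual ℝ A a) (inclusionInDoubleDual ℝ A b)) = _
  rw [fArens_inclusion, fArens_inclusion]
  rfl

end ArensDerivations

section Statements
set_option maxHeartbeats 1000000
open Filter Topology ContinuousLinearMap NormedSpace

variable {A : Type*} [NonUnitalNormedRing A] [NormedSpace ℝ A]
  [SMulCommClass ℝ A A] [IsScalarTower ℝ A A] [CompleteSpace A]

/-- If `A***·A** ⊆ A*`, then `A**` has the `I-w*w` property; consequently weak
amenability of `A**` implies weak amenability of `A`. -/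
theorem Iwsw_of_tripleDual_prod
    (hsub : ∀ (c : Dual ℝ (Dual ℝ (Dual ℝ A))) (a'' : Dual ℝ (Dual ℝ A)), ∃ a' : Dual ℝ A,
      c.comp (fArens A a'') = inclusionInDoubleDual ℝ (Dual ℝ A) a') :
    (∀ a'' : Dual ℝ (Dual ℝ A), WStarToWCont (fun b'' => fArens A a'' b'')) ∧
    ((∀ G : Dual ℝ (Dual ℝ A) →L[ℝ] Dual ℝ (Dual ℝ (Dual ℝ A)),
        IsDeriv (fArens A) (dualLeft2 A) (dualRight2 A) G →
        IsInner (dualLeft2 A) (dualRight2 A) G) →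
      ∀ D : A →L[ℝ] Dual ℝ A,
        IsDeriv (ContinuousLinearMap.mul ℝ A) (dualLeft A) (dualRight A) D →
        IsInner (dualLeft A) (dualRight A) D) :=
  ⟨fun a'' => wStarToWCont_of_comp_eq_inclusion (fArens A a'') (hsub · a''),
    fun hweak _ hD => isInner_of_isInner_adjCLM_adjCLM
      (hweak _ (isDeriv_adjCLM_adjCLM hD fun _ w => hsub _ w))⟩

end Statements
end

section
/- Let A be a Banach algebra, B a norm-closed subalgebra of A** (with first Arens product) containing the canonical image of A, and T, S : A → A continuous linear maps. If B has the T-w*w property and B is weakly T''-S''-amenable, then A is weakly T-S-amenable. -/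
set_option maxHeartbeats 1000000

open Filter Topology ContinuousLinearMap NormedSpace

/-! For a `T-S`-derivation `D : A → A*`, the second adjoint `D'' : A** → A***` satisfies
`⟨D''(x □ y), z⟩ = ⟨D''(y), z □ T''(x)⟩ + ⟨D''(x), S''(y) □ z⟩` whenever `z` has the
`T`-w*w property. For `x = J a` this is the derivation identity of `D`, paired with `z`. For
general `x`, all three terms are weak-star continuous in `x` (the middle one by the `T`-w*w
property), so each is evaluation of `x` at an element of `A*`, namely at its restriction to `A`;
the identity at `x = J a` says these elements match. Hence `D''` restricts to a
`T''-S''`-derivation `B → B*`, which weak amenability makes inner, and restricting the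
implementing functional to `A` shows that `D` is inner. -/

section WeakStarRepresentation

variable {E : Type*} [SeminormedAddCommGroup E] [NormedSpace ℝ E]

theorem WStarToWCont.continuous_comp {F : Type*} [SeminormedAddCommGroup F] [NormedSpace ℝ F]
    {f : Dual ℝ E → F} (hf : WStarToWCont f) (φ : Dual ℝ F) :
    Continuous fun x : WeakDual ℝ E => φ (f (WeakDual.toStrongDual x)) :=
  (WeakBilin.eval_continuous (topDualPairing ℝ F).flip φ).comp hf

theorem apply_eq_apply_comp_inclusionInDoubleDual (Φ : Dual ℝ (Dual ℝ E) →L[ℝ] ℝ)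
    (hΦ : Continuous fun x : WeakDual ℝ (Dual ℝ E) => Φ (WeakDual.toStrongDual x))
    (x : Dual ℝ (Dual ℝ E)) :
    Φ x = x (Φ ∘L inclusionInDoubleDual ℝ E) := by
  obtain ⟨g, hg⟩ := LinearMap.dualEmbedding_surjective (topDualPairing ℝ (Dual ℝ E))
    (⟨(Φ : Dual ℝ (Dual ℝ E) →ₗ[ℝ] ℝ), hΦ⟩ : StrongDual ℝ (WeakDual ℝ (Dual ℝ E)))
  have hΦg : ∀ x, Φ x = x g := fun x => (DFunLike.congr_fun hg x).symm
  obtain rfl : g = Φ ∘L inclusionInDoubleDual ℝ E := by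
    ext a
    exact (hΦg (inclusionInDoubleDual ℝ E a)).symm
  exact hΦg x

end WeakStarRepresentation

section Derivations

variable {A : Type*} [NonUnitalNormedRing A] [NormedSpace ℝ A]
  [SMulCommClass ℝ A A] [IsScalarTower ℝ A A]

theorem IsTSDeriv.secondAdj_fArens_inclusionInDoubleDual {T S : A →L[ℝ] A}
    {D : A →L[ℝ] Dual ℝ A}
    (hD : IsTSDeriv (ContinuousLinearMap.mul ℝ A) (dualLeft A) (dualRight A) T S D)
    (a : A) (y z : Dual ℝ (Dual ℝ A)) :
    adjCLM (adjCLM D) (fArens A (inclusionInDoubleDual ℝ A a) y) z =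
      adjCLM (adjCLM D) y (fArens A z (inclusionInDoubleDual ℝ A (T a))) +
      adjCLM (adjCLM D) (inclusionInDoubleDual ℝ A a) (fArens A (secondAdj A S y) z) := by
  change y (ext1 (ContinuousLinearMap.mul ℝ A) (adjCLM D z) a) =
    y (adjCLM D (fArens A z (inclusionInDoubleDual ℝ A (T a)))) +
    y (adjCLM S (ext1 (ext1 (ContinuousLinearMap.mul ℝ A)) z (D a)))
  rw [← map_add]
  congr 1
  ext c
  exact (congrArg z (hD a c)).trans (map_add z _ _)

theorem IsTSDeriv.secondAdj_fArens {T S : A →L[ℝ] A} {D : A →L[ℝ] Dual ℝ A}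
    (hD : IsTSDeriv (ContinuousLinearMap.mul ℝ A) (dualLeft A) (dualRight A) T S D)
    {z : Dual ℝ (Dual ℝ A)} (hz : WStarToWCont fun b'' => fArens A z (secondAdj A T b''))
    (x y : Dual ℝ (Dual ℝ A)) :
    adjCLM (adjCLM D) (fArens A x y) z =
      adjCLM (adjCLM D) y (fArens A z (secondAdj A T x)) +
      adjCLM (adjCLM D) x (fArens A (secondAdj A S y) z) := by
  have hx := apply_eq_apply_comp_inclusionInDoubleDual
    (adjCLM (adjCLM D) y ∘L fArens A z ∘L secondAdj A T)
    (hz.continuous_comp (adjCLM (adjCLM D) y)) x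
  change x (ext1 (ext1 (ContinuousLinearMap.mul ℝ A)) y (adjCLM D z)) =
    (adjCLM (adjCLM D) y ∘L fArens A z ∘L secondAdj A T) x +
    x (adjCLM D (fArens A (secondAdj A S y) z))
  rw [hx, ← map_add]
  congr 1
  ext a
  exact hD.secondAdj_fArens_inclusionInDoubleDual a y z

end Derivations

section Statements
set_option maxHeartbeats 1000000
open Filter Topology ContinuousLinearMap NormedSpace

variable {A : Type*} [NonUnitalNormedRing A] [NormedSpace ℝ A]
  [SMulCommClass ℝ A A] [IsScalarTower ℝ A A] [CompleteSpace A]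

theorem weaklyTSamenable_of_subalgebra_general (T S : A →L[ℝ] A)
    (B : Submodule ℝ (Dual ℝ (Dual ℝ A)))
    (hmulmem : ∀ x ∈ B, ∀ y ∈ B, fArens A x y ∈ B)
    (hAsub : ∀ a : A, inclusionInDoubleDual ℝ A a ∈ B)
    (hTmem : ∀ x ∈ B, secondAdj A T x ∈ B) (hSmem : ∀ x ∈ B, secondAdj A S x ∈ B)
    (hw : ∀ x ∈ B, WStarToWCont (fun b'' => fArens A x (secondAdj A T b'')))
    (hAm : ∀ G : B →L[ℝ] Dual ℝ B,
      (∀ x y z : B, G ⟨fArens A x.1 y.1, hmulmem x.1 x.2 y.1 y.2⟩ z =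
          G y ⟨fArens A z.1 (secondAdj A T x.1), hmulmem z.1 z.2 _ (hTmem x.1 x.2)⟩ +
          G x ⟨fArens A (secondAdj A S y.1) z.1, hmulmem _ (hSmem y.1 y.2) z.1 z.2⟩) →
      ∃ f : Dual ℝ B, ∀ x z : B, G x z =
          f ⟨fArens A z.1 (secondAdj A T x.1), hmulmem z.1 z.2 _ (hTmem x.1 x.2)⟩ -
          f ⟨fArens A (secondAdj A S x.1) z.1, hmulmem _ (hSmem x.1 x.2) z.1 z.2⟩) :
    ∀ D : A →L[ℝ] Dual ℝ A,
      IsTSDeriv (ContinuousLinearMap.mul ℝ A) (dualLeft A) (dualRight A) T S D →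
      IsTSInner (dualLeft A) (dualRight A) T S D := by
  intro D hD
  obtain ⟨f, hf⟩ := hAm (adjCLM B.subtypeL ∘L adjCLM (adjCLM D) ∘L B.subtypeL)
    fun x y z => hD.secondAdj_fArens (hw z.1 z.2) x.1 y.1
  refine ⟨f ∘L (inclusionInDoubleDual ℝ A).codRestrict B hAsub, fun a => ?_⟩
  ext b
  -- `J b □ T''(J a) = J (b * T a)` and `S''(J a) □ J b = J (S a * b)` hold definitionally.
  exact hf ⟨_, hAsub a⟩ ⟨_, hAsub b⟩

/-- If `B` is a closed subalgebra of `A**` containing `A`, with the `T-w*w` property, and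
`B` is weakly `T''-S''`-amenable, then `A` is weakly `T-S`-amenable. -/
theorem weaklyTSamenable_of_subalgebra (T S : A →L[ℝ] A)
    (B : Submodule ℝ (Dual ℝ (Dual ℝ A))) (hclosed : IsClosed (B : Set (Dual ℝ (Dual ℝ A))))
    (hmulmem : ∀ x ∈ B, ∀ y ∈ B, fArens A x y ∈ B)
    (hAsub : ∀ a : A, inclusionInDoubleDual ℝ A a ∈ B)
    (hTmem : ∀ x ∈ B, secondAdj A T x ∈ B) (hSmem : ∀ x ∈ B, secondAdj A S x ∈ B)
    (hw : ∀ x ∈ B, WStarToWCont (fun b'' => fArens A x (secondAdj A T b'')))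
    (hAm : ∀ G : B →L[ℝ] Dual ℝ B,
      (∀ x y z : B, G ⟨fArens A x.1 y.1, hmulmem x.1 x.2 y.1 y.2⟩ z =
          G y ⟨fArens A z.1 (secondAdj A T x.1), hmulmem z.1 z.2 _ (hTmem x.1 x.2)⟩ +
          G x ⟨fArens A (secondAdj A S y.1) z.1, hmulmem _ (hSmem y.1 y.2) z.1 z.2⟩) →
      ∃ f : Dual ℝ B, ∀ x z : B, G x z =
          f ⟨fArens A z.1 (secondAdj A T x.1), hmulmem z.1 z.2 _ (hTmem x.1 x.2)⟩ -
          f ⟨fArens A (secondAdj A S x.1) z.1, hmulmem _ (hSmem x.1 x.2) z.1 z.2⟩) :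
    ∀ D : A →L[ℝ] Dual ℝ A,
      IsTSDeriv (ContinuousLinearMap.mul ℝ A) (dualLeft A) (dualRight A) T S D →
      IsTSInner (dualLeft A) (dualRight A) T S D :=
  weaklyTSamenable_of_subalgebra_general T S B hmulmem hAsub hTmem hSmem hw hAm

end Statements
end
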